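/- arXiv:2401.07250 — 7 statements merged into one kernel-verified Lean document; each statement's English description precedes it below -/
import Mathlib

section
/- Let f : ℝ^d → ℝ be differentiable, μ-strongly convex and L-smooth with 0 < μ ≤ L, and let ρ > 0. For w, v ∈ ℝ^d define the ascent points w^asc = w + ρ∇f(w) and v^asc = v + ρ∇f(v). Then ‖v^asc − w^asc‖² ≥ (1 + μρ)‖v − w‖² + (μρ/L² + ρ²)‖∇f(v) − ∇f(w)‖². -/
open RealInnerProductSpace

/-- Lower bound on the distance between SAM ascent points:
`‖v^asc − w^asc‖² ≥ (1 + μρ)‖v − w‖² + (μρ/L² + ρ²)‖∇f v − ∇f w‖²` where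
`w^asc = w + ρ∇f w`. -/
theorem sam_ascent_distance_lower_bound {d : ℕ}
    (f : EuclideanSpace ℝ (Fin d) → ℝ) (μ L ρ : ℝ)
    (hμ : 0 < μ) (hμL : μ ≤ L) (hρ : 0 < ρ)
    (hdiff : Differentiable ℝ f)
    (hsc : ∀ v w : EuclideanSpace ℝ (Fin d),
      μ * ‖v - w‖ ^ 2 ≤ ⟪gradient f v - gradient f w, v - w⟫)
    (hsm : ∀ v w : EuclideanSpace ℝ (Fin d),
      ‖gradient f v - gradient f w‖ ≤ L * ‖v - w‖) :
    ∀ v w : EuclideanSpace ℝ (Fin d),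
      (1 + μ * ρ) * ‖v - w‖ ^ 2
        + (μ * ρ / L ^ 2 + ρ ^ 2) * ‖gradient f v - gradient f w‖ ^ 2
        ≤ ‖(v + ρ • gradient f v) - (w + ρ • gradient f w)‖ ^ 2 := by
  intro v w
  have hL : 0 < L := lt_of_lt_of_le hμ hμL
  set g : EuclideanSpace ℝ (Fin d) := gradient f v - gradient f w with hg
  have hrw : (v + ρ • gradient f v) - (w + ρ • gradient f w)
      = (v - w) + ρ • g := by
    rw [hg, smul_sub]; abel
  rw [hrw, norm_add_sq_real, inner_smul_right, norm_smul, mul_pow]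
  have h1 : μ * ‖v - w‖ ^ 2 ≤ ⟪g, v - w⟫ := hsc v w
  have h2 : ‖g‖ ^ 2 / L ^ 2 ≤ ‖v - w‖ ^ 2 := by
    rw [div_le_iff₀ (by positivity)]
    have := pow_le_pow_left₀ (norm_nonneg _) (hsm v w) 2
    nlinarith
  have h3 : μ / L ^ 2 * ‖g‖ ^ 2 ≤ ⟪g, v - w⟫ := by
    calc μ / L ^ 2 * ‖g‖ ^ 2 = μ * (‖g‖ ^ 2 / L ^ 2) := by ring
      _ ≤ μ * ‖v - w‖ ^ 2 := by nlinarith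
      _ ≤ ⟪g, v - w⟫ := h1
  have hnorm : ‖ρ‖ = ρ := abs_of_pos hρ
  rw [hnorm]
  have hcomm : ⟪v - w, g⟫ = ⟪g, v - w⟫ := real_inner_comm _ _
  rw [hcomm]
  have e1 := mul_le_mul_of_nonneg_left h1 hρ.le
  have e2 := mul_le_mul_of_nonneg_left h3 hρ.le
  ring_nf at e1 e2 ⊢
  linarith
end

section
/- (SAM contraction on identical examples.) Let f : ℝ^d → ℝ be differentiable, μ-strongly convex and L-smooth with 0 < μ ≤ L, let ρ > 0, and let the learning rate η > 0 satisfy η ≤ 2/(μ+L) − (μ+L)/(2μL(μ/(ρL²) + 1)). For w, v ∈ ℝ^d define the SAM updates w' = w − η∇f(w + ρ∇f(w)) and v' = v − η∇f(v + ρ∇f(v)). Then ‖v' − w'‖ ≤ (1 − (1 + μρ)·ημL/(μ+L))·‖v − w‖. -/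
/-!
Put `u = v - w`, `b = ∇f v - ∇f w` and let `a` be the gradient difference at the perturbed
points, which differ by `u + ρ b`. Since the Bregman divergence of `f - μ/2 ‖·‖²` lies between
`0` and `(L - μ)/2 ‖·‖²`, the gradient is co-coercive:
`‖∇f x - ∇f y‖² + μL ‖x - y‖² ≤ (μ + L) ⟪∇f x - ∇f y, x - y⟫`.
At the perturbed points, together with `⟪b, u⟫ ≥ μ ‖u‖²`, `‖b‖ ≤ L ‖u‖` and a weighted AM-GM
bound on `⟪a, b⟫`, this gives `2η⟪a, u⟫ ≥ 2κ ‖u‖² + η² ‖a‖²` with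
`κ = (1 + μρ) η μ L / (μ + L)`. Hence `‖u - η a‖² ≤ (1 - 2κ) ‖u‖² ≤ (1 - κ)² ‖u‖²`.
-/

open RealInnerProductSpace

section
variable {E : Type*} [NormedAddCommGroup E] [InnerProductSpace ℝ E]

def bregmanDivergence (φ : E → ℝ) (G : E → E) (x y : E) : ℝ :=
  φ y - φ x - ⟪G x, y - x⟫

lemma bregmanDivergence_neg (φ : E → ℝ) (G : E → E) (x y : E) :
    bregmanDivergence (fun z => -φ z) (fun z => -G z) x y = -bregmanDivergence φ G x y := by
  simp only [bregmanDivergence, inner_neg_left]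
  ring

lemma bregmanDivergence_sub_half_sq (φ : E → ℝ) (G : E → E) (m : ℝ) (x y : E) :
    bregmanDivergence (fun z => φ z - m / 2 * ‖z‖ ^ 2) (fun z => G z - m • z) x y
      = bregmanDivergence φ G x y - m / 2 * ‖y - x‖ ^ 2 := by
  simp only [bregmanDivergence, inner_sub_left, real_inner_smul_left, inner_sub_right,
    norm_sub_sq_real, real_inner_self_eq_norm_sq, real_inner_comm x y]
  ring

lemma HasGradientAt.neg [CompleteSpace E] {φ : E → ℝ} {g x : E} (h : HasGradientAt φ g x) :
    HasGradientAt (fun z => -φ z) (-g) x := by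
  rw [hasGradientAt_iff_hasFDerivAt, map_neg]
  exact h.hasFDerivAt.neg

lemma half_mul_sq_le_bregmanDivergence [CompleteSpace E] {φ : E → ℝ} {G : E → E} {c : ℝ}
    (hφ : ∀ x, HasGradientAt φ (G x) x) (hG : ∀ x y, c * ‖x - y‖ ^ 2 ≤ ⟪G x - G y, x - y⟫)
    (x y : E) : c / 2 * ‖y - x‖ ^ 2 ≤ bregmanDivergence φ G x y := by
  set d := y - x
  let χ : ℝ → ℝ := fun t => φ (x + t • d) - t * ⟪G x, d⟫ - c / 2 * ‖d‖ ^ 2 * t ^ 2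
  let χ' : ℝ → ℝ := fun t => ⟪G (x + t • d), d⟫ - ⟪G x, d⟫ - c * ‖d‖ ^ 2 * t
  have hχ : ∀ t, HasDerivAt χ (χ' t) t := by
    intro t
    have hline : HasDerivAt (fun t : ℝ => x + t • d) d t := by
      simpa using ((hasDerivAt_id t).smul_const d).const_add x
    have hφt : HasDerivAt (fun t => φ (x + t • d)) ⟪G (x + t • d), d⟫ t :=
      (hφ (x + t • d)).hasFDerivAt.comp_hasDerivAt_of_eq t hline rfl
    refine ((hφt.sub ((hasDerivAt_id' t).mul_const ⟪G x, d⟫)).sub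
      ((hasDerivAt_pow 2 t).const_mul (c / 2 * ‖d‖ ^ 2))).congr_deriv ?_
    simp only [χ']
    push_cast
    ring
  obtain ⟨ξ, ⟨hξ0, -⟩, hξ⟩ := exists_hasDerivAt_eq_slope χ χ' zero_lt_one
    (fun t _ => (hχ t).continuousAt.continuousWithinAt) (fun t _ => hχ t)
  have hχ'ξ : 0 ≤ χ' ξ := by
    have h := hG (x + ξ • d) x
    rw [add_sub_cancel_left, real_inner_smul_right, norm_smul, mul_pow, Real.norm_eq_abs,
      sq_abs, inner_sub_left] at h
    have h' : ξ * (c * ‖d‖ ^ 2) ≤ ⟪G (x + ξ • d), d⟫ - ⟪G x, d⟫ :=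
      le_of_mul_le_mul_left (by linarith) hξ0
    simp only [χ']; linarith
  have hχ1 : χ 1 - χ 0 = bregmanDivergence φ G x y - c / 2 * ‖y - x‖ ^ 2 := by
    simp only [χ, bregmanDivergence, d, one_smul, add_sub_cancel, one_mul, one_pow, mul_one, zero_smul, add_zero,
      zero_mul, sub_zero, ne_eq, OfNat.ofNat_ne_zero, not_false_eq_true, zero_pow, mul_zero]
    ring
  rw [sub_zero, div_one, hχ1] at hξ
  linarith

lemma bregmanDivergence_le_half_mul_sq [CompleteSpace E] {φ : E → ℝ} {G : E → E} {C : ℝ}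
    (hφ : ∀ x, HasGradientAt φ (G x) x) (hG : ∀ x y, ⟪G x - G y, x - y⟫ ≤ C * ‖x - y‖ ^ 2)
    (x y : E) : bregmanDivergence φ G x y ≤ C / 2 * ‖y - x‖ ^ 2 := by
  have h := half_mul_sq_le_bregmanDivergence (c := -C) (fun x => (hφ x).neg) (fun x y => by
    rw [neg_sub_neg, ← neg_sub (G x) (G y), inner_neg_left]; linarith [hG x y]) x y
  rw [bregmanDivergence_neg] at h
  linarith

lemma bregmanDivergence_add_bregmanDivergence (φ : E → ℝ) (G : E → E) (x y : E) :
    bregmanDivergence φ G x y + bregmanDivergence φ G y x = ⟪G x - G y, x - y⟫ := by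
  simp only [bregmanDivergence, inner_sub_left, inner_sub_right]
  ring

lemma sq_norm_sub_div_le_bregmanDivergence {ψ : E → ℝ} {H : E → E} {K : ℝ} (hK : 0 < K)
    (hψ : ∀ x y, 0 ≤ bregmanDivergence ψ H x y)
    (hψK : ∀ x y, bregmanDivergence ψ H x y ≤ K / 2 * ‖y - x‖ ^ 2) (x y : E) :
    ‖H y - H x‖ ^ 2 / (2 * K) ≤ bregmanDivergence ψ H x y := by
  set e := H y - H x
  -- the minimiser of the quadratic upper bound at `y`
  set z := y - K⁻¹ • e
  have hlow := hψ x z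
  have hup := hψK y z
  have hzx : z - x = (y - x) - K⁻¹ • e := by simp only [z]; abel
  have hzy : z - y = -(K⁻¹ • e) := by simp only [z]; abel
  have hee : ⟪H y, e⟫ - ⟪H x, e⟫ = ‖e‖ ^ 2 := by
    rw [← inner_sub_left, real_inner_self_eq_norm_sq]
  simp only [bregmanDivergence, hzx, hzy, inner_sub_right, inner_neg_right, real_inner_smul_right,
    norm_neg, norm_smul, mul_pow, Real.norm_eq_abs, sq_abs] at hlow hup ⊢
  have hquad : K / 2 * (K⁻¹ ^ 2 * ‖e‖ ^ 2) = ‖e‖ ^ 2 / (2 * K) := by field_simp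
  have hlin : K⁻¹ * ⟪H y, e⟫ - K⁻¹ * ⟪H x, e⟫ = 2 * (‖e‖ ^ 2 / (2 * K)) := by
    rw [← mul_sub, hee]; field_simp
  linarith

lemma sq_norm_sub_le_mul_inner_of_bregmanDivergence_le {ψ : E → ℝ} {H : E → E} {K : ℝ}
    (hK : 0 < K) (hψ : ∀ x y, 0 ≤ bregmanDivergence ψ H x y)
    (hψK : ∀ x y, bregmanDivergence ψ H x y ≤ K / 2 * ‖y - x‖ ^ 2) (x y : E) :
    ‖H x - H y‖ ^ 2 ≤ K * ⟪H x - H y, x - y⟫ := by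
  have hxy := sq_norm_sub_div_le_bregmanDivergence hK hψ hψK x y
  have hyx := sq_norm_sub_div_le_bregmanDivergence hK hψ hψK y x
  rw [norm_sub_rev] at hxy
  calc ‖H x - H y‖ ^ 2 = K * (‖H x - H y‖ ^ 2 / (2 * K) + ‖H x - H y‖ ^ 2 / (2 * K)) := by
        field_simp; ring
    _ ≤ K * ⟪H x - H y, x - y⟫ := by
        rw [← bregmanDivergence_add_bregmanDivergence]; gcongr

lemma cocoercive_of_bregmanDivergence_bounds {φ : E → ℝ} {G : E → E} {m M : ℝ} (hmM : m < M)
    (hm : ∀ x y, m / 2 * ‖y - x‖ ^ 2 ≤ bregmanDivergence φ G x y)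
    (hM : ∀ x y, bregmanDivergence φ G x y ≤ M / 2 * ‖y - x‖ ^ 2) (x y : E) :
    ‖G x - G y‖ ^ 2 + m * M * ‖x - y‖ ^ 2 ≤ (m + M) * ⟪G x - G y, x - y⟫ := by
  have h := sq_norm_sub_le_mul_inner_of_bregmanDivergence_le (sub_pos.2 hmM)
    (ψ := fun z => φ z - m / 2 * ‖z‖ ^ 2) (H := fun z => G z - m • z)
    (fun x y => by rw [bregmanDivergence_sub_half_sq]; linarith [hm x y])
    (fun x y => by rw [bregmanDivergence_sub_half_sq]; linarith [hM x y]) x y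
  have hsub : G x - m • x - (G y - m • y) = (G x - G y) - m • (x - y) := by
    rw [smul_sub]; abel
  rw [hsub] at h
  set g := G x - G y
  set d := x - y
  clear_value g d
  rw [norm_sub_sq_real, inner_sub_left, real_inner_smul_left, real_inner_smul_right,
    norm_smul, mul_pow, Real.norm_eq_abs, sq_abs, real_inner_self_eq_norm_sq] at h
  linear_combination h

lemma norm_gradient_sub_sq_add_le_inner [CompleteSpace E] {f : E → ℝ} {μ L : ℝ} (hμ : 0 ≤ μ)
    (hμL : μ ≤ L) (hf : Differentiable ℝ f)
    (hsc : ∀ x y, μ * ‖x - y‖ ^ 2 ≤ ⟪gradient f x - gradient f y, x - y⟫)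
    (hsm : ∀ x y, ‖gradient f x - gradient f y‖ ≤ L * ‖x - y‖) (x y : E) :
    ‖gradient f x - gradient f y‖ ^ 2 + μ * L * ‖x - y‖ ^ 2
      ≤ (μ + L) * ⟪gradient f x - gradient f y, x - y⟫ := by
  rcases hμL.lt_or_eq with hlt | rfl
  · have hf' : ∀ x, HasGradientAt f (gradient f x) x := fun x => (hf x).hasGradientAt
    refine cocoercive_of_bregmanDivergence_bounds hlt (half_mul_sq_le_bregmanDivergence hf' hsc)
      (bregmanDivergence_le_half_mul_sq hf' fun x y => ?_) x y
    calc ⟪gradient f x - gradient f y, x - y⟫ ≤ ‖gradient f x - gradient f y‖ * ‖x - y‖ :=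
          real_inner_le_norm _ _
      _ ≤ L * ‖x - y‖ * ‖x - y‖ := by gcongr; exact hsm x y
      _ = L * ‖x - y‖ ^ 2 := by ring
  · have hsm' := pow_le_pow_left₀ (norm_nonneg _) (hsm x y) 2
    nlinarith [mul_le_mul_of_nonneg_left (hsc x y) hμ]

lemma sam_step_size_bound_clear_denoms {μ L ρ η : ℝ} (hμ : 0 < μ) (hμL : μ ≤ L) (hρ : 0 < ρ)
    (hη : η ≤ 2 / (μ + L) - (μ + L) / (2 * μ * L * (μ / (ρ * L ^ 2) + 1))) :
    (μ + L) ^ 2 * ρ * L ≤ 2 * μ * (μ + ρ * L ^ 2) * (2 - (μ + L) * η) := by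
  have hL : 0 < L := hμ.trans_le hμL
  have hS : 0 < μ + L := by positivity
  rw [le_sub_iff_add_le, le_div_iff₀ hS] at hη
  field_simp at hη
  linarith

lemma sam_inner_lower_bound {u b a : E} {μ L ρ η : ℝ} (hμ : 0 < μ) (hμL : μ ≤ L) (hρ : 0 < ρ)
    (hη : (μ + L) ^ 2 * ρ * L ≤ 2 * μ * (μ + ρ * L ^ 2) * (2 - (μ + L) * η))
    (hco : ‖a‖ ^ 2 + μ * L * ‖u + ρ • b‖ ^ 2 ≤ (μ + L) * ⟪a, u + ρ • b⟫)
    (hsc : μ * ‖u‖ ^ 2 ≤ ⟪b, u⟫) (hsm : ‖b‖ ≤ L * ‖u‖) :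
    2 * (1 + μ * ρ) * μ * L * ‖u‖ ^ 2 + (μ + L) * η * ‖a‖ ^ 2 ≤ 2 * (μ + L) * ⟪a, u⟫ := by
  have hL : 0 < L := hμ.trans_le hμL
  rw [norm_add_sq_real, inner_add_right, real_inner_smul_right, real_inner_smul_right,
    norm_smul, mul_pow, Real.norm_eq_abs, sq_abs, real_inner_comm b u] at hco
  have hab : ⟪a, b⟫ ≤ ‖a‖ * ‖b‖ := real_inner_le_norm a b
  have hb : ‖b‖ ^ 2 ≤ L ^ 2 * ‖u‖ ^ 2 := by
    simpa [mul_pow] using pow_le_pow_left₀ (norm_nonneg b) hsm 2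
  -- weighted AM-GM; the step-size condition is exactly what makes its weights admissible
  have hamgm : 2 * ((μ + L) * ρ * L) * (‖a‖ * ‖b‖)
      ≤ (2 - (μ + L) * η) * L * ‖a‖ ^ 2 + 2 * μ * ρ * (μ + ρ * L ^ 2) * ‖b‖ ^ 2 := by
    have hY : 0 < 2 * μ * ρ * (μ + ρ * L ^ 2) := by positivity
    have hWXY := mul_le_mul_of_nonneg_left hη (by positivity : 0 ≤ ρ * L)
    nlinarith [sq_nonneg (2 * μ * ρ * (μ + ρ * L ^ 2) * ‖b‖ - (μ + L) * ρ * L * ‖a‖),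
      mul_nonneg (sq_nonneg ‖a‖) (sub_nonneg.2 hWXY)]
  refine le_of_mul_le_mul_left ?_ hL
  nlinarith [mul_le_mul_of_nonneg_left hsc (by positivity : 0 ≤ 4 * μ * L ^ 2 * ρ),
    mul_le_mul_of_nonneg_left hab (by positivity : 0 ≤ 2 * (μ + L) * ρ * L),
    mul_le_mul_of_nonneg_left hb (by positivity : 0 ≤ 2 * μ ^ 2 * ρ),
    mul_le_mul_of_nonneg_left hco (by positivity : 0 ≤ 2 * L)]

lemma norm_sub_smul_le_of_inner {u a : E} {η x : ℝ}
    (h : 2 * x * ‖u‖ ^ 2 + η ^ 2 * ‖a‖ ^ 2 ≤ 2 * η * ⟪a, u⟫) :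
    ‖u - η • a‖ ≤ (1 - x) * ‖u‖ := by
  have hsq : ‖u - η • a‖ ^ 2 ≤ (1 - 2 * x) * ‖u‖ ^ 2 := by
    rw [norm_sub_sq_real, real_inner_smul_right, norm_smul, mul_pow, Real.norm_eq_abs, sq_abs,
      real_inner_comm]
    linarith
  have hnonneg : 0 ≤ (1 - x) * ‖u‖ := by
    rcases le_or_gt x (1 / 2) with hx | hx
    · exact mul_nonneg (by linarith) (norm_nonneg u)
    · have hneg : (2 * x - 1) * ‖u‖ ^ 2 ≤ 0 := by nlinarith [sq_nonneg ‖u - η • a‖]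
      have hu : ‖u‖ = 0 := pow_eq_zero_iff two_ne_zero |>.1 <|
        le_antisymm (nonpos_of_mul_nonpos_right hneg (by linarith)) (sq_nonneg _)
      simp [hu]
  refine (sq_le_sq₀ (norm_nonneg _) hnonneg).1 ?_
  nlinarith [sq_nonneg (x * ‖u‖)]

end

/-- SAM contraction on identical examples: if the learning rate satisfies
`η ≤ 2/(μ+L) − (μ+L)/(2μL(μ/(ρL²) + 1))`, then the SAM updates
`w' = w − η∇f(w + ρ∇f w)` and `v' = v − η∇f(v + ρ∇f v)` satisfy
`‖v' − w'‖ ≤ (1 − (1 + μρ)ημL/(μ+L))‖v − w‖`. -/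
theorem sam_contraction_same_example {d : ℕ}
    (f : EuclideanSpace ℝ (Fin d) → ℝ) (μ L ρ η : ℝ)
    (hμ : 0 < μ) (hμL : μ ≤ L) (hρ : 0 < ρ) (hη : 0 < η)
    (hηle : η ≤ 2 / (μ + L) - (μ + L) / (2 * μ * L * (μ / (ρ * L ^ 2) + 1)))
    (hdiff : Differentiable ℝ f)
    (hsc : ∀ v w : EuclideanSpace ℝ (Fin d),
      μ * ‖v - w‖ ^ 2 ≤ ⟪gradient f v - gradient f w, v - w⟫)
    (hsm : ∀ v w : EuclideanSpace ℝ (Fin d),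
      ‖gradient f v - gradient f w‖ ≤ L * ‖v - w‖)
    (w v : EuclideanSpace ℝ (Fin d)) :
    ‖(v - η • gradient f (v + ρ • gradient f v))
        - (w - η • gradient f (w + ρ • gradient f w))‖
      ≤ (1 - (1 + μ * ρ) * η * μ * L / (μ + L)) * ‖v - w‖ := by
  set u := v - w
  set b := gradient f v - gradient f w
  set a := gradient f (v + ρ • gradient f v) - gradient f (w + ρ • gradient f w)
  have hperturbed : v + ρ • gradient f v - (w + ρ • gradient f w) = u + ρ • b := by
    simp only [u, b, smul_sub]; abel
  have hco := norm_gradient_sub_sq_add_le_inner hμ.le hμL hdiff hsc hsm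
    (v + ρ • gradient f v) (w + ρ • gradient f w)
  rw [hperturbed] at hco
  have hinner := sam_inner_lower_bound hμ hμL hρ
    (sam_step_size_bound_clear_denoms hμ hμL hρ hηle) hco (hsc v w) (hsm v w)
  have hupdate : v - η • gradient f (v + ρ • gradient f v)
      - (w - η • gradient f (w + ρ • gradient f w)) = u - η • a := by
    simp only [u, a, smul_sub]; abel
  rw [hupdate]
  refine norm_sub_smul_le_of_inner ?_
  have hS : 0 < μ + L := by linarith
  calc 2 * ((1 + μ * ρ) * η * μ * L / (μ + L)) * ‖u‖ ^ 2 + η ^ 2 * ‖a‖ ^ 2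
      = η / (μ + L) * (2 * (1 + μ * ρ) * μ * L * ‖u‖ ^ 2 + (μ + L) * η * ‖a‖ ^ 2) := by
        field_simp
    _ ≤ η / (μ + L) * (2 * (μ + L) * ⟪a, u⟫) := by gcongr
    _ = 2 * η * ⟪a, u⟫ := by field_simp
end

section
/- For all real numbers 0 < μ ≤ L and all ρ > 0, the SAM learning-rate threshold satisfies 2/(μ+L) − (μ+L)/(2μL(μ/(ρL²) + 1)) ≤ 2/((1 + μρ)(μ + L)); in particular any learning rate below this threshold makes the SAM contraction factor 1 − (1 + μρ)·ημL/(μ+L) lie in [0, 1). -/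
/-!
Clearing denominators, the threshold bound becomes
`4μ²(μ + ρL²) ≤ (μ + L)² L (1 + μρ)`, which splits into `4μ³ ≤ (μ + L)² L` (from `μ ≤ L`)
and `4μL ≤ (μ + L)²` (AM–GM). For the contraction factor, AM–GM again gives
`(1 + μρ) η μ L / (μ + L) ≤ 2μL / (μ + L)² ≤ 1/2` whenever `η ≤ 2 / ((1 + μρ)(μ + L))`.
-/

noncomputable section

def samThreshold (μ L ρ : ℝ) : ℝ :=
  2 / (μ + L) - (μ + L) / (2 * μ * L * (μ / (ρ * L ^ 2) + 1))

end

lemma four_mul_sq_mul_add_le {μ L ρ : ℝ} (hμ : 0 < μ) (hμL : μ ≤ L) (hρ : 0 ≤ ρ) :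
    4 * μ ^ 2 * (μ + ρ * L ^ 2) ≤ (μ + L) ^ 2 * L * (1 + μ * ρ) := by
  have hL : 0 < L := hμ.trans_le hμL
  have amgm : 4 * μ * L ≤ (μ + L) ^ 2 := by nlinarith [sq_nonneg (L - μ)]
  have cube : 4 * μ ^ 3 ≤ (μ + L) ^ 2 * L := by
    nlinarith [mul_le_mul amgm hμL hμ.le (sq_nonneg (μ + L))]
  have cross : 4 * μ ^ 2 * (ρ * L ^ 2) ≤ (μ + L) ^ 2 * L * (μ * ρ) := by
    nlinarith [mul_le_mul_of_nonneg_right amgm (by positivity : 0 ≤ μ * ρ * L)]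
  linarith

lemma samThreshold_eq {μ L ρ : ℝ} (hμ : μ ≠ 0) (hL : L ≠ 0) (hρ : ρ ≠ 0) :
    samThreshold μ L ρ = 2 / (μ + L) - (μ + L) * ρ * L / (2 * μ * (μ + ρ * L ^ 2)) := by
  rw [samThreshold, div_add_one (mul_ne_zero hρ (pow_ne_zero 2 hL))]
  field_simp

theorem samThreshold_le {μ L ρ : ℝ} (hμ : 0 < μ) (hμL : μ ≤ L) (hρ : 0 < ρ) :
    samThreshold μ L ρ ≤ 2 / ((1 + μ * ρ) * (μ + L)) := by
  have hL : 0 < L := hμ.trans_le hμL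
  have hgap : 2 / (μ + L) - 2 / ((1 + μ * ρ) * (μ + L))
      = 2 * μ * ρ / ((1 + μ * ρ) * (μ + L)) := by
    field_simp
    ring
  rw [samThreshold_eq hμ.ne' hL.ne' hρ.ne', sub_le_comm, hgap,
    div_le_div_iff₀ (by positivity) (by positivity)]
  linarith [mul_le_mul_of_nonneg_left (four_mul_sq_mul_add_le hμ hμL hρ.le) hρ.le]

theorem one_sub_mul_div_mem_Ico {a b c η : ℝ} (ha : 0 < a) (hb : 0 < b) (hc : 0 < c)
    (hη : 0 < η) (hle : η ≤ 2 / (c * (a + b))) :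
    1 - c * η * a * b / (a + b) ∈ Set.Ico 0 1 := by
  have hab : 0 < a + b := by positivity
  have hcη : c * η * (a + b) ≤ 2 := by
    rw [le_div_iff₀ (by positivity)] at hle
    linarith
  have hnum : c * η * a * b ≤ a + b := by
    nlinarith [sq_nonneg (a - b), mul_le_mul_of_nonneg_right hcη (mul_pos ha hb).le]
  exact ⟨sub_nonneg.2 (div_le_one_of_le₀ hnum hab.le), sub_lt_self _ (by positivity)⟩

/-- The SAM learning-rate threshold satisfies
`2/(μ+L) − (μ+L)/(2μL(μ/(ρL²) + 1)) ≤ 2/((1 + μρ)(μ + L))`; in particular, any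
positive learning rate below the threshold yields a contraction factor
`1 − (1 + μρ)ημL/(μ+L)` in `[0, 1)`. -/
theorem sam_threshold_bound_and_contraction_factor (μ L ρ : ℝ)
    (hμ : 0 < μ) (hμL : μ ≤ L) (hρ : 0 < ρ) :
    2 / (μ + L) - (μ + L) / (2 * μ * L * (μ / (ρ * L ^ 2) + 1))
      ≤ 2 / ((1 + μ * ρ) * (μ + L)) ∧
    ∀ η : ℝ, 0 < η →
      η ≤ 2 / (μ + L) - (μ + L) / (2 * μ * L * (μ / (ρ * L ^ 2) + 1)) →
      1 - (1 + μ * ρ) * η * μ * L / (μ + L) ∈ Set.Ico (0 : ℝ) 1 :=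
  ⟨samThreshold_le hμ hμL hρ, fun _η hη hle =>
    one_sub_mul_div_mem_Ico hμ (hμ.trans_le hμL) (by positivity) hη
      (hle.trans (samThreshold_le hμ hμL hρ))⟩
end

section
/- Let 0 < μ < L. If the perturbation radius ρ satisfies 0 < ρ < 4μ²/(L(L − μ)²), then the SAM learning-rate threshold is feasible, i.e. 2/(μ+L) − (μ+L)/(2μL(μ/(ρL²) + 1)) > 0. -/
/-- Feasibility of the SAM learning-rate threshold: if `0 < μ < L` and
`0 < ρ < 4μ²/(L(L − μ)²)`, then `2/(μ+L) − (μ+L)/(2μL(μ/(ρL²) + 1)) > 0`. -/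
theorem sam_threshold_feasible (μ L ρ : ℝ)
    (hμ : 0 < μ) (hμL : μ < L)
    (hρ : 0 < ρ) (hρub : ρ < 4 * μ ^ 2 / (L * (L - μ) ^ 2)) :
    0 < 2 / (μ + L) - (μ + L) / (2 * μ * L * (μ / (ρ * L ^ 2) + 1)) := by
  have hL : 0 < L := hμ.trans hμL
  have hden : 0 < L * (L - μ) ^ 2 := mul_pos hL (pow_pos (sub_pos.mpr hμL) 2)
  have h1 : ρ * (L * (L - μ) ^ 2) < 4 * μ ^ 2 := (lt_div_iff₀ hden).mp hρub
  set x := μ / (ρ * L ^ 2) with hxdef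
  have hxpos : 0 < x := by positivity
  have hx : x * (ρ * L ^ 2) = μ := by
    rw [hxdef]; field_simp
  have hD : 0 < 2 * μ * L * (x + 1) := by positivity
  have hsum : 0 < μ + L := by linarith
  rw [sub_pos, div_lt_div_iff₀ hD hsum]
  nlinarith [hx, h1, mul_pos hρ (mul_pos hL hL), sq_nonneg (L - μ), mul_pos hxpos hρ]
end

section
/- (SAM generalization bound is tighter than SGD's.) Let a > 1 and x be real numbers with 0 < a·x < 1, and let T ≥ 1 be an integer. Then a·(1 − x)^T − (1 − a·x)^T ≤ a − 1; equivalently, (1/a)·(1 − (1 − a·x)^T) ≤ 1 − (1 − x)^T. In particular, with a = 1 + μρ and x = ημL/(μ+L), the SAM stability bound (2G²(μ+L))/(nμL(1+μρ))·(1 − (1 − (1+μρ)ημL/(μ+L))^T) is at most the SGD stability bound (2G²(μ+L))/(nμL)·(1 − (1 − ημL/(μ+L))^T). -/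
/-- For `a > 1`, `0 < a·x < 1` and `T ≥ 1`: `a(1 − x)^T − (1 − ax)^T ≤ a − 1`,
equivalently `(1/a)(1 − (1 − ax)^T) ≤ 1 − (1 − x)^T`; in particular with
`a = 1 + μρ` and `x = ημL/(μ+L)` the SAM stability bound is at most the SGD
stability bound. -/
theorem sam_bound_tighter_than_sgd (a x : ℝ) (T : ℕ)
    (ha : 1 < a) (hax0 : 0 < a * x) (hax1 : a * x < 1) (hT : 1 ≤ T) :
    a * (1 - x) ^ T - (1 - a * x) ^ T ≤ a - 1 ∧
    (1 / a) * (1 - (1 - a * x) ^ T) ≤ 1 - (1 - x) ^ T ∧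
    ∀ μ L ρ η G : ℝ, ∀ n : ℕ,
      0 < μ → μ ≤ L → 0 < ρ → 0 < η → 0 < G → 1 ≤ n →
      a = 1 + μ * ρ → x = η * μ * L / (μ + L) →
      2 * G ^ 2 * (μ + L) / ((n : ℝ) * μ * L * (1 + μ * ρ))
          * (1 - (1 - (1 + μ * ρ) * η * μ * L / (μ + L)) ^ T)
        ≤ 2 * G ^ 2 * (μ + L) / ((n : ℝ) * μ * L)
          * (1 - (1 - η * μ * L / (μ + L)) ^ T) := by
  have ha0 : (0:ℝ) < a := by linarith
  have hx0 : 0 < x := by nlinarith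
  have hx1 : x < 1 := by nlinarith
  have key : ∀ t : ℕ, a * (1 - x) ^ t - (1 - a * x) ^ t ≤ a - 1 := by
    intro t
    induction t with
    | zero => simp
    | succ t ih =>
      have h1 : (0:ℝ) ≤ 1 - x := by linarith
      have h2 : (0:ℝ) ≤ (1 - a * x) ^ t := pow_nonneg (by linarith) t
      have h3 : (1 - a * x) ^ t ≤ 1 := pow_le_one₀ (by linarith) (by linarith)
      have heq : a * (1 - x) ^ (t + 1) - (1 - a * x) ^ (t + 1)
          = (1 - x) * (a * (1 - x) ^ t - (1 - a * x) ^ t)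
            + (a - 1) * x * (1 - a * x) ^ t := by ring
      rw [heq]
      nlinarith [mul_le_mul_of_nonneg_left ih h1,
        mul_le_mul_of_nonneg_left h3 (show (0:ℝ) ≤ (a - 1) * x by nlinarith)]
  have part1 := key T
  have part2 : (1 / a) * (1 - (1 - a * x) ^ T) ≤ 1 - (1 - x) ^ T := by
    rw [one_div, inv_mul_le_iff₀ ha0]
    nlinarith
  refine ⟨part1, part2, ?_⟩
  intro μ L ρ η G n hμ hμL hρ hη hG hn ha' hx'
  have hL : 0 < L := lt_of_lt_of_le hμ hμL
  have hML : 0 < μ + L := by linarith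
  have hn' : (0:ℝ) < (n:ℝ) := by exact_mod_cast Nat.lt_of_lt_of_le Nat.zero_lt_one hn
  have e1 : (1 + μ * ρ) * η * μ * L / (μ + L) = a * x := by
    rw [ha', hx']; ring
  have e2 : η * μ * L / (μ + L) = x := hx'.symm
  rw [e1, e2]
  have hC : (0:ℝ) ≤ 2 * G ^ 2 * (μ + L) / ((n : ℝ) * μ * L) := by positivity
  have eC : 2 * G ^ 2 * (μ + L) / ((n : ℝ) * μ * L * (1 + μ * ρ))
      = 2 * G ^ 2 * (μ + L) / ((n : ℝ) * μ * L) * (1 / a) := by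
    rw [ha']
    have h1 : (1:ℝ) + μ * ρ ≠ 0 := by positivity
    field_simp
  rw [eC, mul_assoc]
  exact mul_le_mul_of_nonneg_left part2 hC
end

section
/- (SSAM contraction on identical examples.) Let f : ℝ^d → ℝ be differentiable, μ-strongly convex and L-smooth with 0 < μ ≤ L, let ρ > 0, let 0 < γ ≤ γ_upp < 1, and let the learning rate η > 0 satisfy η ≤ (1/γ_upp)·[2/(μ+L) − (μ+L)/(2μL(μ/(ρL²) + 1))]. For w, v ∈ ℝ^d define the SSAM updates w' = w − γη∇f(w + ρ∇f(w)) and v' = v − γη∇f(v + ρ∇f(v)). Then ‖v' − w'‖ ≤ (1 − (1 + μρ)·γημL/(μ+L))·‖v − w‖. -/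
/-!
Let `δ = v - w` and let `Δ` be the difference of the SAM gradients `∇f (v + ρ ∇f v)` and
`∇f (w + ρ ∇f w)`. Since `f - μ/2 ‖·‖²` is convex and `(L - μ)`-smooth, Baillon–Haddad
cocoercivity yields the coercivity inequality
`μ L ‖y - x‖² + ‖∇f y - ∇f x‖² ≤ (μ + L) ⟪∇f y - ∇f x, y - x⟫`.
At the perturbed points, whose difference is `δ + ρ (∇f v - ∇f w)`, it controls `⟪Δ, δ⟫`
up to a cross term `ρ ⟪Δ, ∇f v - ∇f w⟫`; splitting that term by a weighted AM–GM and using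
strong convexity and smoothness at `v, w` gives
`2 ⟪Δ, δ⟫ - γη ‖Δ‖² ≥ 2 (1 + μρ) μL/(μ+L) ‖δ‖²` under the step-size condition.
Expanding `‖δ - γη Δ‖²` then gives the contraction.
-/

open RealInnerProductSpace Set

theorem add_add_half_le_of_hasDerivAt {φ φ' : ℝ → ℝ} {c : ℝ}
    (hφ : ∀ t, HasDerivAt φ (φ' t) t) (hφ' : ∀ t ∈ Ioo (0 : ℝ) 1, c * t ≤ φ' t - φ' 0) :
    φ 0 + φ' 0 + c / 2 ≤ φ 1 := by
  set g : ℝ → ℝ := fun t => φ t - t * φ' 0 - c / 2 * t ^ 2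
  have hg : ∀ t, HasDerivAt g (φ' t - φ' 0 - c * t) t := fun t => by
    refine (((hφ t).sub ((hasDerivAt_id' t).mul_const (φ' 0))).sub
      ((hasDerivAt_pow 2 t).const_mul (c / 2))).congr_deriv ?_
    push_cast
    ring
  have hmono : MonotoneOn g (Icc 0 1) :=
    monotoneOn_of_hasDerivWithinAt_nonneg (convex_Icc 0 1)
      (fun t _ => (hg t).continuousAt.continuousWithinAt) (fun t _ => (hg t).hasDerivWithinAt)
      (fun t ht => by rw [interior_Icc] at ht; linarith [hφ' t ht])
  have h01 := hmono (left_mem_Icc.2 zero_le_one) (right_mem_Icc.2 zero_le_one) zero_le_one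
  simp only [g] at h01
  linarith

section InnerProductSpace

variable {E : Type*} [NormedAddCommGroup E] [InnerProductSpace ℝ E]

theorem sq_norm_sub_le_mul_inner_of_convex_of_descent {p : E → ℝ} {P : E → E} {c : ℝ}
    (hc : 0 ≤ c) (hconv : ∀ x y, p x + ⟪P x, y - x⟫ ≤ p y)
    (hdesc : ∀ x y, p y ≤ p x + ⟪P x, y - x⟫ + c / 2 * ‖y - x‖ ^ 2) (x y : E) :
    ‖P y - P x‖ ^ 2 ≤ c * ⟪P y - P x, y - x⟫ := by
  -- compare `p` at `z = y - t • (P y - P x)` with its linearizations at `x` and at `y`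
  have one : ∀ x y : E, ∀ t : ℝ,
      p x + ⟪P x, y - x⟫ + (t - c / 2 * t ^ 2) * ‖P y - P x‖ ^ 2 ≤ p y := by
    intro x y t
    have h1 := hconv x (y - t • (P y - P x))
    have h2 := hdesc y (y - t • (P y - P x))
    rw [sub_sub_cancel_left, norm_neg, norm_smul, inner_neg_right, real_inner_smul_right,
      Real.norm_eq_abs, mul_pow, sq_abs] at h2
    rw [sub_right_comm, inner_sub_right, real_inner_smul_right] at h1
    have h3 : ⟪P y, P y - P x⟫ - ⟪P x, P y - P x⟫ = ‖P y - P x‖ ^ 2 := by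
      rw [← inner_sub_left, real_inner_self_eq_norm_sq]
    linarith [congrArg (t * ·) h3]
  have key : ∀ t : ℝ, (2 * t - c * t ^ 2) * ‖P y - P x‖ ^ 2 ≤ ⟪P y - P x, y - x⟫ := by
    intro t
    have h1 := one x y t
    have h2 := one y x t
    rw [← norm_neg, neg_sub] at h2
    have h3 : ⟪P y - P x, y - x⟫ = -⟪P x, y - x⟫ - ⟪P y, x - y⟫ := by
      rw [inner_sub_left, ← neg_sub x y, inner_neg_right]
      ring
    linarith
  rcases hc.eq_or_lt with rfl | hc
  · rw [zero_mul]
    by_contra! hpos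
    set A := ‖P y - P x‖ ^ 2
    have := key ((⟪P y - P x, y - x⟫ + 1) / (2 * A))
    field_simp at this
    linarith
  · have := key c⁻¹
    field_simp at this
    linarith

theorem norm_sub_smul_le_of_two_mul_sq_le {x y : E} {s m : ℝ} (hs : 0 ≤ s)
    (h : 2 * m * ‖x‖ ^ 2 ≤ 2 * ⟪y, x⟫ - s * ‖y‖ ^ 2) :
    ‖x - s • y‖ ≤ (1 - s * m) * ‖x‖ := by
  have hsq : ‖x - s • y‖ ^ 2 ≤ (1 - 2 * s * m) * ‖x‖ ^ 2 := by
    rw [norm_sub_sq_real, real_inner_smul_right, norm_smul, Real.norm_eq_abs, abs_of_nonneg hs,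
      real_inner_comm]
    nlinarith [mul_le_mul_of_nonneg_left h hs]
  -- `hsq` forces `2 * s * m ≤ 1` unless `x = 0`
  have hnn : 0 ≤ (1 - s * m) * ‖x‖ := by
    rcases (norm_nonneg x).eq_or_lt with h0 | hpos
    · rw [← h0, mul_zero]
    · have : 0 ≤ 1 - 2 * s * m :=
        nonneg_of_mul_nonneg_left ((sq_nonneg _).trans hsq) (by positivity)
      nlinarith
  refine le_of_pow_le_pow_left₀ two_ne_zero hnn (hsq.trans ?_)
  nlinarith [sq_nonneg (s * m * ‖x‖)]

/-- The `τ` of the step-size condition `γ η ≤ 2 / (μ + L) - τ`: the AM–GM weight for which the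
`‖∇f v - ∇f w‖²` terms created by the perturbation are absorbed by strong convexity and
smoothness at `v, w`. -/
noncomputable def ssamSlack (μ L ρ : ℝ) : ℝ := (μ + L) / (2 * μ * L * (μ / (ρ * L ^ 2) + 1))

theorem ssamSlack_pos {μ L ρ : ℝ} (hμ : 0 < μ) (hL : 0 < L) (hρ : 0 < ρ) :
    0 < ssamSlack μ L ρ := by
  unfold ssamSlack
  positivity

theorem sq_div_ssamSlack {μ L ρ : ℝ} (hμ : 0 < μ) (hL : 0 < L) (hρ : 0 < ρ) :
    ρ ^ 2 / ssamSlack μ L ρ = 2 * (μ * L / (μ + L)) * (ρ ^ 2 + ρ * μ / L ^ 2) := by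
  unfold ssamSlack
  field_simp
  ring

theorem two_mul_sq_le_two_inner_sub_sq {δ e Δ : E} {μ L ρ s : ℝ} (hμ : 0 < μ) (hμL : μ ≤ L)
    (hρ : 0 < ρ) (hs : s ≤ 2 / (μ + L) - ssamSlack μ L ρ)
    (hco : μ * L * ‖δ + ρ • e‖ ^ 2 + ‖Δ‖ ^ 2 ≤ (μ + L) * ⟪Δ, δ + ρ • e⟫)
    (hsc : μ * ‖δ‖ ^ 2 ≤ ⟪e, δ⟫) (hsm : ‖e‖ ≤ L * ‖δ‖) :
    2 * ((1 + μ * ρ) * μ * L / (μ + L)) * ‖δ‖ ^ 2 ≤ 2 * ⟪Δ, δ⟫ - s * ‖Δ‖ ^ 2 := by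
  have hL : 0 < L := hμ.trans_le hμL
  have hμL0 : 0 < μ + L := by linarith
  have hτ := ssamSlack_pos hμ hL hρ
  set τ := ssamSlack μ L ρ
  set κ := μ * L / (μ + L) with hκ
  have hco' : κ * ‖δ + ρ • e‖ ^ 2 + ‖Δ‖ ^ 2 / (μ + L) ≤ ⟪Δ, δ + ρ • e⟫ := by
    rw [hκ, div_mul_eq_mul_div, ← add_div, div_le_iff₀ hμL0]
    linarith
  rw [norm_add_sq_real, inner_add_right, real_inner_smul_right, real_inner_smul_right,
    norm_smul, Real.norm_eq_abs, abs_of_pos hρ, mul_pow] at hco'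
  have hcs : ρ * ⟪Δ, e⟫ ≤ ρ * (‖Δ‖ * ‖e‖) :=
    mul_le_mul_of_nonneg_left (real_inner_le_norm _ _) hρ.le
  have hAM : 2 * ρ * (‖Δ‖ * ‖e‖) ≤ ρ ^ 2 / τ * ‖e‖ ^ 2 + τ * ‖Δ‖ ^ 2 := by
    rw [div_mul_eq_mul_div, div_add' _ _ _ hτ.ne', le_div_iff₀ hτ]
    nlinarith [sq_nonneg (ρ * ‖e‖ - τ * ‖Δ‖)]
  have hsm' : ‖e‖ ^ 2 / L ^ 2 ≤ ‖δ‖ ^ 2 := by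
    rw [div_le_iff₀ (by positivity)]
    nlinarith [norm_nonneg e]
  have hs' := mul_le_mul_of_nonneg_right hs (sq_nonneg ‖Δ‖)
  rw [sq_div_ssamSlack hμ hL hρ, ← hκ] at hAM
  rw [real_inner_comm e δ] at hco'
  rw [show (1 + μ * ρ) * μ * L / (μ + L) = (1 + μ * ρ) * κ by rw [hκ]; ring]
  linear_combination 2 * hco' + 2 * hcs + hAM + hs' +
    mul_le_mul_of_nonneg_left hsc (by positivity : 0 ≤ 4 * κ * ρ) +
    mul_le_mul_of_nonneg_left hsm' (by positivity : 0 ≤ 2 * κ * ρ * μ)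

end InnerProductSpace

section Gradient

variable {E : Type*} [NormedAddCommGroup E] [InnerProductSpace ℝ E] [CompleteSpace E]
  {f : E → ℝ}

theorem hasDerivAt_comp_add_smul (hf : Differentiable ℝ f) (x u : E) (t : ℝ) :
    HasDerivAt (fun s : ℝ => f (x + s • u)) ⟪gradient f (x + t • u), u⟫ t := by
  have hline : HasDerivAt (fun s : ℝ => x + s • u) u t := by
    simpa using ((hasDerivAt_id t).smul_const u).const_add x
  have hf' : HasFDerivAt f (InnerProductSpace.toDual ℝ E (gradient f (x + t • u))) (x + t • u) :=
    (hf _).hasGradientAt.hasFDerivAt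
  have h := hf'.comp_hasDerivAt t hline
  rwa [InnerProductSpace.toDual_apply_apply] at h

theorem add_inner_gradient_add_half_le {μ : ℝ} (hf : Differentiable ℝ f)
    (hsc : ∀ v w, μ * ‖v - w‖ ^ 2 ≤ ⟪gradient f v - gradient f w, v - w⟫) (x y : E) :
    f x + ⟪gradient f x, y - x⟫ + μ / 2 * ‖y - x‖ ^ 2 ≤ f y := by
  have := add_add_half_le_of_hasDerivAt (c := μ * ‖y - x‖ ^ 2)
    (hasDerivAt_comp_add_smul hf x (y - x)) fun t ht => by
      have h := hsc (x + t • (y - x)) x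
      rw [add_sub_cancel_left, real_inner_smul_right, norm_smul, Real.norm_eq_abs,
        abs_of_pos ht.1] at h
      rw [zero_smul, add_zero, ← inner_sub_left]
      refine le_of_mul_le_mul_left ?_ ht.1
      linarith
  simpa only [zero_smul, add_zero, one_smul, add_sub_cancel, div_mul_eq_mul_div,
    mul_div_assoc] using this

theorem le_add_inner_gradient_add_half {L : ℝ} (hf : Differentiable ℝ f)
    (hsm : ∀ v w, ‖gradient f v - gradient f w‖ ≤ L * ‖v - w‖) (x y : E) :
    f y ≤ f x + ⟪gradient f x, y - x⟫ + L / 2 * ‖y - x‖ ^ 2 := by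
  have := add_add_half_le_of_hasDerivAt (φ := fun s => -f (x + s • (y - x)))
    (φ' := fun s => -⟪gradient f (x + s • (y - x)), y - x⟫) (c := -(L * ‖y - x‖ ^ 2))
    (fun t => (hasDerivAt_comp_add_smul hf x (y - x) t).neg) fun t ht => by
      have h := hsm (x + t • (y - x)) x
      rw [add_sub_cancel_left, norm_smul, Real.norm_eq_abs, abs_of_pos ht.1] at h
      have hcs := real_inner_le_norm (gradient f (x + t • (y - x)) - gradient f x) (y - x)
      rw [inner_sub_left] at hcs
      rw [zero_smul, add_zero]
      nlinarith [mul_le_mul_of_nonneg_right h (norm_nonneg (y - x))]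
  simp only [zero_smul, add_zero, one_smul, add_sub_cancel] at this
  linarith

theorem mul_sq_add_sq_le_inner_gradient_sub {μ L : ℝ} (hμL : μ ≤ L) (hf : Differentiable ℝ f)
    (hsc : ∀ v w, μ * ‖v - w‖ ^ 2 ≤ ⟪gradient f v - gradient f w, v - w⟫)
    (hsm : ∀ v w, ‖gradient f v - gradient f w‖ ≤ L * ‖v - w‖) (x y : E) :
    μ * L * ‖y - x‖ ^ 2 + ‖gradient f y - gradient f x‖ ^ 2
      ≤ (μ + L) * ⟪gradient f y - gradient f x, y - x⟫ := by
  have hsq : ∀ a b : E, μ / 2 * ‖b‖ ^ 2 = μ / 2 * (‖a‖ ^ 2 + 2 * ⟪a, b - a⟫ + ‖b - a‖ ^ 2) :=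
    fun a b => by rw [← norm_add_sq_real, add_sub_cancel]
  have hP : ∀ a b : E, ⟪gradient f a - μ • a, b - a⟫
      = ⟪gradient f a, b - a⟫ - μ * ⟪a, b - a⟫ := fun a b => by
    rw [inner_sub_left, real_inner_smul_left]
  -- `f - μ/2 ‖·‖²` is convex and `(L - μ)`-smooth, hence its gradient is cocoercive
  have h := sq_norm_sub_le_mul_inner_of_convex_of_descent (p := fun a => f a - μ / 2 * ‖a‖ ^ 2)
    (P := fun a => gradient f a - μ • a) (sub_nonneg.2 hμL)
    (fun a b => by
      simp only [hP]
      linarith [add_inner_gradient_add_half_le hf hsc a b, hsq a b])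
    (fun a b => by
      simp only [hP]
      linarith [le_add_inner_gradient_add_half hf hsm a b, hsq a b]) x y
  have hrw : gradient f y - μ • y - (gradient f x - μ • x)
      = (gradient f y - gradient f x) - μ • (y - x) := by
    rw [smul_sub]; abel
  simp only [hrw] at h
  generalize gradient f y - gradient f x = G at h ⊢
  generalize y - x = d at h ⊢
  rw [norm_sub_sq_real, real_inner_smul_right, inner_sub_left, real_inner_smul_left,
    norm_smul, real_inner_self_eq_norm_sq, Real.norm_eq_abs, mul_pow, sq_abs] at h
  nlinarith

noncomputable def samGradient (f : E → ℝ) (ρ : ℝ) (w : E) : E :=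
  gradient f (w + ρ • gradient f w)

theorem two_mul_sq_le_two_inner_samGradient_sub {μ L ρ s : ℝ} (hμ : 0 < μ) (hμL : μ ≤ L)
    (hρ : 0 < ρ) (hs : s ≤ 2 / (μ + L) - ssamSlack μ L ρ) (hf : Differentiable ℝ f)
    (hsc : ∀ v w, μ * ‖v - w‖ ^ 2 ≤ ⟪gradient f v - gradient f w, v - w⟫)
    (hsm : ∀ v w, ‖gradient f v - gradient f w‖ ≤ L * ‖v - w‖) (v w : E) :
    2 * ((1 + μ * ρ) * μ * L / (μ + L)) * ‖v - w‖ ^ 2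
      ≤ 2 * ⟪samGradient f ρ v - samGradient f ρ w, v - w⟫
        - s * ‖samGradient f ρ v - samGradient f ρ w‖ ^ 2 := by
  have hco := mul_sq_add_sq_le_inner_gradient_sub hμL hf hsc hsm
    (w + ρ • gradient f w) (v + ρ • gradient f v)
  rw [show v + ρ • gradient f v - (w + ρ • gradient f w)
      = v - w + ρ • (gradient f v - gradient f w) by rw [smul_sub]; abel] at hco
  exact two_mul_sq_le_two_inner_sub_sq hμ hμL hρ hs hco (hsc v w) (hsm v w)

end Gradient

theorem ssam_contraction_same_example_general {d : ℕ}
    (f : EuclideanSpace ℝ (Fin d) → ℝ) (μ L ρ η γ γupp : ℝ)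
    (hμ : 0 < μ) (hμL : μ ≤ L) (hρ : 0 < ρ) (hη : 0 < η)
    (hγ0 : 0 < γ) (hγupp : γ ≤ γupp)
    (hηle : η ≤ (1 / γupp) *
      (2 / (μ + L) - (μ + L) / (2 * μ * L * (μ / (ρ * L ^ 2) + 1))))
    (hdiff : Differentiable ℝ f)
    (hsc : ∀ v w : EuclideanSpace ℝ (Fin d),
      μ * ‖v - w‖ ^ 2 ≤ ⟪gradient f v - gradient f w, v - w⟫)
    (hsm : ∀ v w : EuclideanSpace ℝ (Fin d),
      ‖gradient f v - gradient f w‖ ≤ L * ‖v - w‖)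
    (w v : EuclideanSpace ℝ (Fin d)) :
    ‖(v - (γ * η) • gradient f (v + ρ • gradient f v))
        - (w - (γ * η) • gradient f (w + ρ • gradient f w))‖
      ≤ (1 - (1 + μ * ρ) * γ * η * μ * L / (μ + L)) * ‖v - w‖ := by
  have hγupp0 : 0 < γupp := hγ0.trans_le hγupp
  have hs : γ * η ≤ 2 / (μ + L) - ssamSlack μ L ρ :=
    calc γ * η ≤ γupp * η := by gcongr
      _ ≤ γupp * ((1 / γupp) * (2 / (μ + L) - ssamSlack μ L ρ)) := by gcongr; exact hηle
      _ = 2 / (μ + L) - ssamSlack μ L ρ := by field_simp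
  have key := two_mul_sq_le_two_inner_samGradient_sub hμ hμL hρ hs hdiff hsc hsm v w
  calc _ = ‖(v - w) - (γ * η) • (samGradient f ρ v - samGradient f ρ w)‖ := by
        congr 1
        rw [smul_sub, samGradient, samGradient]
        abel
    _ ≤ (1 - γ * η * ((1 + μ * ρ) * μ * L / (μ + L))) * ‖v - w‖ :=
        norm_sub_smul_le_of_two_mul_sq_le (by positivity) key
    _ = _ := by ring

/-- SSAM contraction on identical examples: if
`η ≤ (1/γ_upp)[2/(μ+L) − (μ+L)/(2μL(μ/(ρL²) + 1))]` and `0 < γ ≤ γ_upp < 1`,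
then the SSAM updates `w' = w − γη∇f(w + ρ∇f w)` and
`v' = v − γη∇f(v + ρ∇f v)` satisfy
`‖v' − w'‖ ≤ (1 − (1 + μρ)γημL/(μ+L))‖v − w‖`. -/
theorem ssam_contraction_same_example {d : ℕ}
    (f : EuclideanSpace ℝ (Fin d) → ℝ) (μ L ρ η γ γupp : ℝ)
    (hμ : 0 < μ) (hμL : μ ≤ L) (hρ : 0 < ρ) (hη : 0 < η)
    (hγ0 : 0 < γ) (hγupp : γ ≤ γupp) (hγupp1 : γupp < 1)
    (hηle : η ≤ (1 / γupp) *
      (2 / (μ + L) - (μ + L) / (2 * μ * L * (μ / (ρ * L ^ 2) + 1))))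
    (hdiff : Differentiable ℝ f)
    (hsc : ∀ v w : EuclideanSpace ℝ (Fin d),
      μ * ‖v - w‖ ^ 2 ≤ ⟪gradient f v - gradient f w, v - w⟫)
    (hsm : ∀ v w : EuclideanSpace ℝ (Fin d),
      ‖gradient f v - gradient f w‖ ≤ L * ‖v - w‖)
    (w v : EuclideanSpace ℝ (Fin d)) :
    ‖(v - (γ * η) • gradient f (v + ρ • gradient f v))
        - (w - (γ * η) • gradient f (w + ρ • gradient f w))‖
      ≤ (1 - (1 + μ * ρ) * γ * η * μ * L / (μ + L)) * ‖v - w‖ :=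
  ssam_contraction_same_example_general f μ L ρ η γ γupp hμ hμL hρ hη hγ0 hγupp hηle hdiff hsc hsm w
    v
end

section
/- (Recursive inequality for renormalized sequences.) Let γ_1, …, γ_T be real numbers with 0 < γ_k < 1 for all 1 ≤ k ≤ T, and for 1 ≤ k ≤ T let γ_max^k = max{γ_1, …, γ_k}. Let α > 0, let β satisfy 0 < β < 1/γ_max^T, let i ≥ 1 be an integer, and define Ψ(k) = α·(γ_max^k)^i · Σ_{j=0}^{k−1} (1 − γ_max^k·β)^j. Then for every 1 ≤ k ≤ T − 1, (1 − γ_{k+1}·β)·Ψ(k) + (γ_{k+1})^i·α ≤ Ψ(k+1). -/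
/-!
With `Φₖ = renormGeomSum i k β`, `Ψ(k) = α Φₖ(γ_max^k)` and `Φₖ₊₁(x) = (1 - xβ) Φₖ(x) + x^i`.
The geometric sum gives `β Φₖ(x) = x^{i-1} (1 - (1 - xβ)^k)`, so `Φₖ` is nondecreasing on
`[0, 1/β]`. If `γ_{k+1} ≥ γ_max^k`, then `γ_max^{k+1} = γ_{k+1}` and
the inequality is this monotonicity, multiplied by `1 - γ_{k+1}β ≥ 0`. Otherwise
`γ_max^{k+1} = γ_max^k =: m` and it reduces to `(m - g) m^{i-1} (1 - (1 - mβ)^k) ≤ m^i - g^i`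
for `g = γ_{k+1} ≤ m`, which holds because `g^i ≤ g m^{i-1}`.
-/

open Finset

noncomputable def renormGeomSum (i k : ℕ) (β x : ℝ) : ℝ :=
  x ^ i * ∑ j ∈ range k, (1 - x * β) ^ j

namespace renormGeomSum

variable {i k : ℕ} {β g m x y : ℝ}

lemma succ_right :
    renormGeomSum i (k + 1) β x = (1 - x * β) * renormGeomSum i k β x + x ^ i := by
  simp only [renormGeomSum, geom_sum_succ]
  ring

lemma mul_pow_succ :
    β * renormGeomSum (i + 1) k β x = x ^ i * (1 - (1 - x * β) ^ k) := by
  rw [← mul_neg_geom_sum, sub_sub_cancel, renormGeomSum]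
  ring

lemma mono (hi : 1 ≤ i) (hβ : 0 < β) (hx : 0 ≤ x) (hxy : x ≤ y) (hyβ : y * β ≤ 1) :
    renormGeomSum i k β x ≤ renormGeomSum i k β y := by
  obtain ⟨n, rfl⟩ : ∃ n, i = n + 1 := ⟨i - 1, by omega⟩
  refine le_of_mul_le_mul_left ?_ hβ
  rw [mul_pow_succ, mul_pow_succ]
  have hpow : (1 - y * β) ^ k ≤ (1 - x * β) ^ k :=
    pow_le_pow_left₀ (by linarith) (by nlinarith) k
  have hx_pow : (1 - x * β) ^ k ≤ 1 := pow_le_one₀ (by nlinarith) (by nlinarith)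
  gcongr
  exact pow_nonneg (hx.trans hxy) n

lemma one_sub_mul_add_pow_le_of_le (hi : 1 ≤ i) (hg : 0 ≤ g) (hgm : g ≤ m)
    (hmβ : m * β ≤ 1) :
    (1 - g * β) * renormGeomSum i k β m + g ^ i ≤ renormGeomSum i (k + 1) β m := by
  obtain ⟨n, rfl⟩ : ∃ n, i = n + 1 := ⟨i - 1, by omega⟩
  have hΦ : β * renormGeomSum (n + 1) k β m = m ^ n * (1 - (1 - m * β) ^ k) := mul_pow_succ
  have hq : 0 ≤ (1 - m * β) ^ k := pow_nonneg (by linarith) k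
  have hgn : g ^ n ≤ m ^ n := pow_le_pow_left₀ hg hgm n
  have hmn : 0 ≤ m ^ n := pow_nonneg (hg.trans hgm) n
  rw [succ_right, pow_succ, pow_succ]
  nlinarith [mul_le_mul_of_nonneg_left hgn hg, mul_nonneg (mul_nonneg hmn (sub_nonneg.2 hgm)) hq]

lemma one_sub_mul_add_pow_le_max (hi : 1 ≤ i) (hβ : 0 < β) (hg : 0 ≤ g) (hm : 0 ≤ m)
    (hβmax : max g m * β ≤ 1) :
    (1 - g * β) * renormGeomSum i k β m + g ^ i ≤ renormGeomSum i (k + 1) β (max g m) := by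
  rcases le_total g m with hgm | hmg
  · rw [max_eq_right hgm] at hβmax ⊢
    exact one_sub_mul_add_pow_le_of_le hi hg hgm hβmax
  · rw [max_eq_left hmg] at hβmax ⊢
    rw [succ_right]
    have : 0 ≤ 1 - g * β := by linarith
    gcongr
    exact mono hi hβ hm hmg hβmax

end renormGeomSum

lemma Finset.sup'_Icc_add_one {α : Type*} [SemilatticeSup α] (f : ℕ → α) {a b : ℕ}
    (hab : a ≤ b) :
    (Icc a (b + 1)).sup' (nonempty_Icc.2 (by omega)) f =
      f (b + 1) ⊔ (Icc a b).sup' (nonempty_Icc.2 hab) f := by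
  rw [← sup'_insert]
  exact sup'_congr _ (insert_Icc_right_eq_Icc_add_one (by omega)).symm fun _ _ ↦ rfl

theorem recursive_inequality_renormalized_general (T : ℕ)
    (γ : ℕ → ℝ)
    (hγ : ∀ k, 1 ≤ k → k ≤ T → 0 < γ k ∧ γ k < 1)
    (γmax : ℕ → ℝ)
    (hγmax : ∀ k, ∀ hk : 1 ≤ k, k ≤ T →
      γmax k = (Finset.Icc 1 k).sup' (Finset.nonempty_Icc.mpr hk) γ)
    (α β : ℝ) (hα : 0 < α) (hβ0 : 0 < β) (hβ : β < 1 / γmax T)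
    (i : ℕ) (hi : 1 ≤ i)
    (Ψ : ℕ → ℝ)
    (hΨ : ∀ k, 1 ≤ k → k ≤ T →
      Ψ k = α * (γmax k) ^ i * ∑ j ∈ Finset.range k, (1 - γmax k * β) ^ j) :
    ∀ k, 1 ≤ k → k ≤ T - 1 →
      (1 - γ (k + 1) * β) * Ψ k + (γ (k + 1)) ^ i * α ≤ Ψ (k + 1) := by
  intro k hk hkT
  have hΨ' : ∀ l, 1 ≤ l → l ≤ T → Ψ l = α * renormGeomSum i l β (γmax l) :=
    fun l hl hlT ↦ by rw [hΨ l hl hlT, renormGeomSum, mul_assoc]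
  have hg : 0 < γ (k + 1) := (hγ (k + 1) (by omega) (by omega)).1
  have hm : 0 < γmax k := by
    rw [hγmax k hk (by omega)]
    exact (hγ k hk (by omega)).1.trans_le (le_sup' γ (mem_Icc.2 ⟨hk, le_rfl⟩))
  have hmax : γmax (k + 1) = max (γ (k + 1)) (γmax k) := by
    rw [hγmax (k + 1) (by omega) (by omega), hγmax k hk (by omega), sup'_Icc_add_one γ hk]
  have hβmax : γmax (k + 1) * β ≤ 1 := by
    have hle : γmax (k + 1) ≤ γmax T := by
      rw [hγmax (k + 1) (by omega) (by omega), hγmax T (by omega) le_rfl]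
      exact sup'_mono γ (Icc_subset_Icc_right (by omega)) _
    have hT : 0 < γmax T := hm.trans_le ((le_max_right _ _).trans (hmax.ge.trans hle))
    nlinarith [(lt_div_iff₀ hT).1 hβ]
  have key :=
    renormGeomSum.one_sub_mul_add_pow_le_max (k := k) hi hβ0 hg.le hm.le (hmax ▸ hβmax)
  rw [hΨ' k hk (by omega), hΨ' (k + 1) (by omega) (by omega), hmax]
  linarith [mul_le_mul_of_nonneg_left key hα.le]

/-- Recursive inequality for renormalized sequences: with
`γ_max^k = max{γ_1, …, γ_k}` and
`Ψ(k) = α(γ_max^k)^i ∑_{j=0}^{k−1} (1 − γ_max^k β)^j`, for every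
`1 ≤ k ≤ T − 1`, `(1 − γ_{k+1}β)Ψ(k) + (γ_{k+1})^i α ≤ Ψ(k+1)`. -/
theorem recursive_inequality_renormalized (T : ℕ) (hT : 1 ≤ T)
    (γ : ℕ → ℝ)
    (hγ : ∀ k, 1 ≤ k → k ≤ T → 0 < γ k ∧ γ k < 1)
    (γmax : ℕ → ℝ)
    (hγmax : ∀ k, ∀ hk : 1 ≤ k, k ≤ T →
      γmax k = (Finset.Icc 1 k).sup' (Finset.nonempty_Icc.mpr hk) γ)
    (α β : ℝ) (hα : 0 < α) (hβ0 : 0 < β) (hβ : β < 1 / γmax T)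
    (i : ℕ) (hi : 1 ≤ i)
    (Ψ : ℕ → ℝ)
    (hΨ : ∀ k, 1 ≤ k → k ≤ T →
      Ψ k = α * (γmax k) ^ i * ∑ j ∈ Finset.range k, (1 - γmax k * β) ^ j) :
    ∀ k, 1 ≤ k → k ≤ T - 1 →
      (1 - γ (k + 1) * β) * Ψ k + (γ (k + 1)) ^ i * α ≤ Ψ (k + 1) :=
  recursive_inequality_renormalized_general T γ hγ γmax hγmax α β hα hβ0 hβ i hi Ψ hΨ
end
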